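/- Elliptical potential trace bound: let φ_1, …, φ_m ∈ ℝ^D with ‖φ_i‖ ≤ 1, and define M_0 = λ·I (λ ≥ 1) and M_i = M_{i-1} + φ_i φ_iᵀ. Then ∑_{i=1}^m φ_iᵀ M_i⁻¹ φ_i ≤ log(det(M_m)/det(M_0)). -/

import Mathlib

/-!
With `x = φᵀ M_{i+1}⁻¹ φ`, the matrix determinant lemma applied to the downdate
`M_i = M_{i+1} - φ φᵀ` gives `det M_i = det M_{i+1} * (1 - x)`, so
`x ≤ -log (1 - x) = log det M_{i+1} - log det M_i`; the sum of these telescopes.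
-/

open Matrix

theorem Matrix.det_add_vecMulVec {n R : Type*} [Fintype n] [DecidableEq n] [CommRing R]
    {A : Matrix n n R} (hA : IsUnit A.det) (u v : n → R) :
    (A + vecMulVec u v).det = A.det * (1 + v ⬝ᵥ A⁻¹ *ᵥ u) := by
  rw [vecMulVec_eq Unit, det_add_replicateCol_mul_replicateRow hA, Matrix.mul_assoc,
    ← replicateCol_mulVec]
  simp [replicateRow_mul_replicateCol_apply]

theorem Matrix.dotProduct_inv_add_vecMulVec_le_log_det_sub {n : Type*} [Fintype n]
    [DecidableEq n] {B : Matrix n n ℝ} (v : n → ℝ) (hB : 0 < B.det)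
    (hA : 0 < (B + vecMulVec v v).det) :
    v ⬝ᵥ (B + vecMulVec v v)⁻¹ *ᵥ v ≤ Real.log (B + vecMulVec v v).det - Real.log B.det := by
  set A := B + vecMulVec v v
  set x := v ⬝ᵥ A⁻¹ *ᵥ v
  have hdowndate : B = A + vecMulVec (-v) v := by
    rw [neg_vecMulVec, ← sub_eq_add_neg, add_sub_cancel_right]
  have hdet : B.det = A.det * (1 - x) := by
    rw [hdowndate, det_add_vecMulVec hA.ne'.isUnit, mulVec_neg, dotProduct_neg, ← sub_eq_add_neg]
  have hx : 0 < 1 - x := pos_of_mul_pos_right (hdet ▸ hB) hA.le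
  have hlog : Real.log (1 - x) ≤ -x := by linarith [Real.log_le_sub_one_of_pos hx]
  rw [hdet, Real.log_mul hA.ne' hx.ne']
  linarith

theorem elliptical_potential_bound_general (D m : ℕ)
    (φ : Fin m → (Fin D → ℝ))
    (M : ℕ → Matrix (Fin D) (Fin D) ℝ)
    (hMrec : ∀ i : Fin m, M (i + 1) = M i + vecMulVec (φ i) (φ i))
    (hMpd : ∀ i, (M i).PosDef) :
    ∑ i : Fin m, φ i ⬝ᵥ (M (i + 1))⁻¹ *ᵥ φ i
      ≤ Real.log ((M m).det / (M 0).det) := by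
  have hdet : ∀ i, 0 < (M i).det := fun i => (hMpd i).det_pos
  calc ∑ i : Fin m, φ i ⬝ᵥ (M (i + 1))⁻¹ *ᵥ φ i
      ≤ ∑ i : Fin m, (Real.log (M (i + 1)).det - Real.log (M i).det) := by
        refine Finset.sum_le_sum fun i _ => ?_
        have hstep := dotProduct_inv_add_vecMulVec_le_log_det_sub (φ i) (hdet i)
          (hMrec i ▸ hdet (i + 1))
        rwa [← hMrec i] at hstep
    _ = Real.log (M m).det - Real.log (M 0).det := by
        rw [Fin.sum_univ_eq_sum_range fun i => Real.log (M (i + 1)).det - Real.log (M i).det]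
        exact Finset.sum_range_sub (fun i => Real.log (M i).det) m
    _ = Real.log ((M m).det / (M 0).det) := (Real.log_div (hdet m).ne' (hdet 0).ne').symm

theorem elliptical_potential_bound (D m : ℕ) (hD : 0 < D) (hm : 0 < m)
    (lam : ℝ) (hlam : 1 ≤ lam)
    (φ : Fin m → (Fin D → ℝ)) (hφ : ∀ i, ‖(EuclideanSpace.equiv (Fin D) ℝ).symm (φ i)‖ ≤ 1)
    (M : ℕ → Matrix (Fin D) (Fin D) ℝ)
    (hM0 : M 0 = lam • (1 : Matrix (Fin D) (Fin D) ℝ))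
    (hMrec : ∀ i : Fin m, M (i + 1) = M i + vecMulVec (φ i) (φ i))
    (hMpd : ∀ i, (M i).PosDef) :
    ∑ i : Fin m, φ i ⬝ᵥ (M (i + 1))⁻¹ *ᵥ φ i
      ≤ Real.log ((M m).det / (M 0).det) :=
  elliptical_potential_bound_general D m φ M hMrec hMpd
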